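/- arXiv:1208.6195 — 8 statements merged into one kernel-verified Lean document; each statement's English description precedes it below -/
import Mathlib

section
/- For every positive integer m and every real β with 1 < β ≤ λ_m, the Hausdorff dimension of the set Σ_β(x) of β-expansions of x satisfies dim_H(Σ_β(x)) ≥ 1/(m+2) for every x ∈ (0, 1/(β-1)). -/
open scoped ENNReal

/-- The metric on `{0,1}^ℕ` given by `dist x y = (1/2)^(first index where x, y differ)`.
This is bi-Lipschitz equivalent to the metric `2^{-n(x,y)}` from the paper (with indices
starting at 1), hence induces the same Hausdorff dimension. -/
noncomputable instance : MetricSpace (ℕ → Bool) := PiNat.metricSpace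

/-- The set `Σ_β(x)` of β-expansions of `x`: sequences `(ε_n)_{n ≥ 1}` of zeros and ones
with `Σ_{n=1}^∞ ε_n / β^n = x` (here indexed from 0, so digit `n` has weight `β^{-(n+1)}`). -/
def betaExpansions (β x : ℝ) : Set (ℕ → Bool) :=
  {ε | ∑' n : ℕ, (if ε n then (1 : ℝ) else 0) / β ^ (n + 1) = x}

/-- `r` is the smallest real root greater than 1 of `P`. -/
def IsSmallestRootGT1 (P : ℝ → ℝ) (r : ℝ) : Prop :=
  1 < r ∧ P r = 0 ∧ ∀ y : ℝ, 1 < y → P y = 0 → r ≤ y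

/-!
Put `ℓ = 1 / (β ^ 2 - 1)` and `c = 1 / (β - 1)`. The window `W = [ℓ, βℓ]` is symmetric in
`[0, c]` and lies in the switch region, so from a remainder in `W` both digits are admissible.
Outside `W` the digit is forced and the distance of the remainder to the nearer end of `[0, c]`
is multiplied by `β`; since `W` is a fundamental domain of `y ↦ βy`, the orbit then lands in `W`.
After a free choice that distance is at least `βℓ - 1`, and `β ≤ λ_m` means exactly
`β ^ (m + 1) (βℓ - 1) ≥ ℓ`, so the next free choice comes within `m + 2` steps.
Feeding the free choices with a binary sequence `σ` yields an expansion `encode σ` of `x`, and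
agreement of `encode σ`, `encode τ` on `n` digits forces agreement of `σ`, `τ` on about
`n / (m + 2)` digits. Hence `encode σ ↦ 0.σ₀σ₁…` is `1 / (m + 2)`-Hölder from a subset of
`Σ_β(x)` onto `[0, 1]`.
-/

open Set Filter Topology
open scoped NNReal

lemma IsSmallestRootGT1.nonpos_of_le {P : ℝ → ℝ} {r y₀ β : ℝ} (hr : IsSmallestRootGT1 P r)
    (hP : Continuous P) (hy₀ : 1 < y₀) (hPy₀ : P y₀ < 0) (hy₀β : y₀ ≤ β) (hβr : β ≤ r) :
    P β ≤ 0 := by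
  by_contra! hPβ
  obtain ⟨z, hz, hPz⟩ := intermediate_value_Icc hy₀β hP.continuousOn ⟨hPy₀.le, hPβ.le⟩
  have hrz : r ≤ z := hr.2.2 z (hy₀.trans_le hz.1) hPz
  rw [← le_antisymm hz.2 (hβr.trans hrz)] at hPβ
  exact hPβ.ne' hPz

lemma exists_lambdaPoly_neg {m : ℕ} (hm : 0 < m) {β : ℝ} (hβ : 1 < β) :
    ∃ y, 1 < y ∧ y ^ (m + 3) - y ^ (m + 2) - y ^ (m + 1) + 1 < 0 ∧ y ≤ β := by
  set ε := min (1 / 4 : ℝ) (β - 1)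
  have hε : 0 < ε := lt_min (by norm_num) (by linarith)
  have hε₁ : ε ≤ 1 / 4 := min_le_left _ _
  refine ⟨1 + ε, by linarith, ?_, by linarith [min_le_right (1 / 4 : ℝ) (β - 1)]⟩
  -- `y ^ (m + 1) ≥ y ^ 2` reduces the claim to the case `m = 1`.
  have hpow : (1 + ε) ^ 2 ≤ (1 + ε) ^ (m + 1) := pow_le_pow_right₀ (by linarith) (by omega)
  have hneg : (1 + ε) ^ 2 - (1 + ε) - 1 < 0 := by nlinarith
  calc (1 + ε) ^ (m + 3) - (1 + ε) ^ (m + 2) - (1 + ε) ^ (m + 1) + 1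
      = (1 + ε) ^ (m + 1) * ((1 + ε) ^ 2 - (1 + ε) - 1) + 1 := by ring
    _ ≤ (1 + ε) ^ 2 * ((1 + ε) ^ 2 - (1 + ε) - 1) + 1 :=
        by nlinarith [mul_le_mul_of_nonpos_right hpow hneg.le]
    _ = ε * ((1 + ε) ^ 3 - (1 + ε) - 1) := by ring
    _ < 0 := mul_neg_of_pos_of_neg hε (by nlinarith)

lemma lambdaPoly_nonpos_of_le {m : ℕ} (hm : 0 < m) {lam β : ℝ}
    (hlam : IsSmallestRootGT1 (fun y => y ^ (m + 3) - y ^ (m + 2) - y ^ (m + 1) + 1) lam)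
    (hβ : 1 < β) (hβlam : β ≤ lam) : β ^ (m + 3) - β ^ (m + 2) - β ^ (m + 1) + 1 ≤ 0 :=
  let ⟨_, hy₁, hy, hyβ⟩ := exists_lambdaPoly_neg hm hβ
  hlam.nonpos_of_le (by fun_prop) hy₁ hy hyβ hβlam

lemma le_dimH_range_of_edist_le {α X : Type*} [EMetricSpace X] {e : α → X} {v : α → ℝ}
    {C r : ℝ≥0} (hr : 0 < r) (hv : ∀ a b, edist (v a) (v b) ≤ C * edist (e a) (e b) ^ (r : ℝ))
    (hI : (interior (range v)).Nonempty) : (r : ℝ≥0∞) ≤ dimH (range e) := by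
  obtain ⟨a₀, -⟩ := mem_range.1 (interior_subset hI.some_mem)
  have : Nonempty α := ⟨a₀⟩
  set f := v ∘ Function.invFun e
  have hf : HolderOnWith C r f (range e) := by
    rintro _ ⟨a, rfl⟩ _ ⟨b, rfl⟩
    simpa only [f, Function.comp, Function.invFun_eq ⟨a, rfl⟩, Function.invFun_eq ⟨b, rfl⟩]
      using hv (Function.invFun e (e a)) (Function.invFun e (e b))
  have hrange : range v ⊆ f '' range e := by
    rintro _ ⟨a, rfl⟩
    refine ⟨e a, mem_range_self a, ?_⟩
    have h := hv (Function.invFun e (e a)) a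
    rw [Function.invFun_eq (f := e) ⟨a, rfl⟩, edist_self,
      ENNReal.zero_rpow_of_pos (by exact_mod_cast hr), mul_zero, nonpos_iff_eq_zero,
      edist_eq_zero] at h
    exact h
  have h1 : 1 ≤ dimH (range e) / r := by
    calc (1 : ℝ≥0∞) = dimH (range v) := by rw [Real.dimH_of_nonempty_interior hI]; simp
      _ ≤ dimH (f '' range e) := dimH_mono hrange
      _ ≤ dimH (range e) / r := hf.dimH_image_le hr
  rwa [ENNReal.le_div_iff_mul_le (Or.inl (by exact_mod_cast hr.ne')) (Or.inl ENNReal.coe_ne_top),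
    one_mul] at h1

lemma edist_le_of_forall_eq_of_lt {α : Type*} {e : α → ℕ → Bool} {v : α → ℝ} {C r : ℝ≥0}
    (hr : 0 < r)
    (h : ∀ a b n, (∀ i < n, e a i = e b i) → |v a - v b| ≤ C * ((1 / 2 : ℝ) ^ n) ^ (r : ℝ))
    (a b : α) : edist (v a) (v b) ≤ C * edist (e a) (e b) ^ (r : ℝ) := by
  by_cases hab : e a = e b
  · have hlim : Tendsto (fun n : ℕ => (C : ℝ) * ((1 / 2 : ℝ) ^ n) ^ (r : ℝ)) atTop (𝓝 0) := by
      have := ((tendsto_pow_atTop_nhds_zero_of_lt_one (r := (1 / 2 : ℝ)) (by norm_num)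
        (by norm_num)).rpow_const (p := r) (Or.inr r.coe_nonneg)).const_mul (C : ℝ)
      rwa [Real.zero_rpow (by exact_mod_cast hr.ne'), mul_zero] at this
    have hv : |v a - v b| ≤ 0 :=
      ge_of_tendsto hlim (Eventually.of_forall fun n => h a b n fun i _ => congrFun hab i)
    rw [sub_eq_zero.1 (abs_nonpos_iff.1 hv), edist_self]
    exact bot_le
  · have hn := h a b _ fun i hi => PiNat.apply_eq_of_lt_firstDiff hi
    rw [edist_dist, edist_dist, Real.dist_eq, PiNat.dist_eq_of_ne hab,
      ENNReal.ofReal_rpow_of_nonneg (by positivity) r.coe_nonneg, ← ENNReal.ofReal_coe_nnreal,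
      ← ENNReal.ofReal_mul C.coe_nonneg]
    exact ENNReal.ofReal_le_ofReal hn

lemma inv_two_pow_le_of_le_mul_add {M k n B : ℕ} (hM : 0 < M) (h : n ≤ M * k + B) :
    ((2 : ℝ) ^ k)⁻¹ ≤ 2 ^ ((B : ℝ) / M) * ((1 / 2 : ℝ) ^ n) ^ ((M : ℝ)⁻¹) := by
  have h2 : ∀ j : ℕ, (1 / 2 : ℝ) ^ j = 2 ^ (-(j : ℝ)) := fun j => by
    rw [one_div, inv_pow, ← Real.rpow_natCast, Real.rpow_neg zero_le_two]
  rw [← one_div, ← one_div_pow, h2, h2, ← Real.rpow_mul zero_le_two, ← Real.rpow_add two_pos]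
  refine Real.rpow_le_rpow_of_exponent_le one_le_two ?_
  have hM' : (0 : ℝ) < M := by exact_mod_cast hM
  have h' : (n : ℝ) ≤ M * k + B := by exact_mod_cast h
  rw [show (B : ℝ) / M + -n * (M : ℝ)⁻¹ = (B - n) / M by ring, le_div_iff₀ hM']
  nlinarith

namespace BetaCoding

section Window

variable (β : ℝ)

noncomputable def lo : ℝ := 1 / (β ^ 2 - 1)

noncomputable def hi : ℝ := β * lo β

noncomputable def top : ℝ := 1 / (β - 1)

noncomputable def margin : ℝ := hi β - 1

abbrev window : Set ℝ := Icc (lo β) (hi β)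

noncomputable def digit (y : ℝ) (b : Fin 2) : Bool :=
  if y < lo β then false else if hi β < y then true else finTwoEquiv b

noncomputable def next (y : ℝ) (b : Fin 2) : ℝ := β * y - if digit β y b then 1 else 0

variable {β}

lemma lo_pos (hβ : 1 < β) : 0 < lo β := by
  have : 0 < β ^ 2 - 1 := by nlinarith
  unfold lo; positivity

lemma lo_lt_hi (hβ : 1 < β) : lo β < hi β :=
  lt_mul_left (lo_pos hβ) hβ

lemma lo_add_hi (hβ : 1 < β) : lo β + hi β = top β := by
  have : β - 1 ≠ 0 := by linarith
  have : β + 1 ≠ 0 := by linarith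
  rw [hi, lo, top, show β ^ 2 - 1 = (β - 1) * (β + 1) by ring]
  field_simp
  ring

lemma beta_mul_top (hβ : 1 < β) : β * top β = top β + 1 := by
  have : β - 1 ≠ 0 := by linarith
  unfold top
  field_simp
  ring

lemma next_of_lt_lo {y : ℝ} (hy : y < lo β) (b : Fin 2) : next β y b = β * y := by
  simp [next, digit, hy]

lemma top_sub_next_of_hi_lt (hβ : 1 < β) {y : ℝ} (hy : hi β < y) (b : Fin 2) :
    top β - next β y b = β * (top β - y) := by
  have : ¬ y < lo β := not_lt.2 ((lo_lt_hi hβ).trans hy).le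
  simp only [next, digit, this, hy, if_false, if_true]
  linear_combination -beta_mul_top hβ

lemma next_of_mem_window {y : ℝ} (hy : y ∈ window β) (b : Fin 2) :
    next β y b = β * y - if finTwoEquiv b then 1 else 0 := by
  simp [next, digit, not_lt.2 hy.1, not_lt.2 hy.2]

lemma margin_le_next (hβ : 1 < β) {y : ℝ} (hy : y ∈ window β) (b : Fin 2) :
    margin β ≤ next β y b ∧ margin β ≤ top β - next β y b := by
  have hβhi : β * hi β = top β - margin β := by
    have h₁ := lo_add_hi hβ
    have h₂ := beta_mul_top hβ
    unfold margin hi at *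
    linear_combination β * h₁ + h₂
  have hlo : β * lo β ≤ β * y := mul_le_mul_of_nonneg_left hy.1 (by linarith)
  have hhi : β * y ≤ β * hi β := mul_le_mul_of_nonneg_left hy.2 (by linarith)
  rw [next_of_mem_window hy]
  unfold margin hi at *
  cases finTwoEquiv b <;> simp only [Bool.false_eq_true, if_true, if_false] <;>
    constructor <;> linarith

lemma lo_le_pow_mul_margin {m : ℕ} (hβ : 1 < β)
    (hP : β ^ (m + 3) - β ^ (m + 2) - β ^ (m + 1) + 1 ≤ 0) : lo β ≤ β ^ (m + 1) * margin β := by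
  have hD : β ^ 2 - 1 ≠ 0 := by nlinarith
  have hmargin : margin β = (β + 1 - β ^ 2) * lo β := by
    unfold margin hi lo
    field_simp
    ring
  have h1 : 1 ≤ β ^ (m + 1) * (β + 1 - β ^ 2) := by
    have : β ^ (m + 3) - β ^ (m + 2) - β ^ (m + 1) = β ^ (m + 1) * (β ^ 2 - β - 1) := by ring
    linarith
  calc lo β = lo β * 1 := (mul_one _).symm
    _ ≤ lo β * (β ^ (m + 1) * (β + 1 - β ^ 2)) := mul_le_mul_of_nonneg_left h1 (lo_pos hβ).le
    _ = β ^ (m + 1) * margin β := by rw [hmargin]; ring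

end Window

section Trajectory

noncomputable def state (β x : ℝ) (σ : ℕ → Fin 2) : ℕ → ℝ × ℕ
  | 0 => (x, 0)
  | n + 1 => (next β (state β x σ n).1 (σ (state β x σ n).2),
      (state β x σ n).2 + if (state β x σ n).1 ∈ window β then 1 else 0)

noncomputable def rem (β x : ℝ) (σ : ℕ → Fin 2) (n : ℕ) : ℝ := (state β x σ n).1

noncomputable def choices (β x : ℝ) (σ : ℕ → Fin 2) (n : ℕ) : ℕ := (state β x σ n).2

noncomputable def encode (β x : ℝ) (σ : ℕ → Fin 2) (n : ℕ) : Bool :=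
  digit β (rem β x σ n) (σ (choices β x σ n))

variable {β x : ℝ} {σ τ : ℕ → Fin 2} {m n : ℕ}

lemma rem_succ (n : ℕ) :
    rem β x σ (n + 1) = β * rem β x σ n - if encode β x σ n then 1 else 0 := rfl

lemma choices_succ (n : ℕ) :
    choices β x σ (n + 1) = choices β x σ n + if rem β x σ n ∈ window β then 1 else 0 := rfl

lemma sum_range_encode_div_pow (hβ : β ≠ 0) (n : ℕ) :
    ∑ i ∈ Finset.range n, (if encode β x σ i then (1 : ℝ) else 0) / β ^ (i + 1) =
      x - rem β x σ n / β ^ n := by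
  induction n with
  | zero => simp [rem, state]
  | succ n ih =>
    rw [Finset.sum_range_succ, ih, rem_succ]
    field_simp
    ring

lemma rem_mem_Ioo (hβ : 1 < β) (hmargin : 0 < margin β) (hx : x ∈ Ioo 0 (top β)) (n : ℕ) :
    rem β x σ n ∈ Ioo 0 (top β) := by
  induction n with
  | zero => exact hx
  | succ n ih =>
    have hlh := lo_add_hi hβ
    have hlo := lo_pos hβ
    change next β (rem β x σ n) (σ (choices β x σ n)) ∈ _
    rcases lt_or_ge (rem β x σ n) (lo β) with h | h
    · rw [next_of_lt_lo h]
      have : β * rem β x σ n < hi β := mul_lt_mul_of_pos_left h (by linarith)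
      constructor <;> nlinarith [ih.1]
    rcases le_or_gt (rem β x σ n) (hi β) with h' | h'
    · have := margin_le_next hβ ⟨h, h'⟩ (σ (choices β x σ n))
      constructor <;> linarith
    · have := top_sub_next_of_hi_lt hβ h' (σ (choices β x σ n))
      have : β * (top β - rem β x σ n) < hi β :=
        mul_lt_mul_of_pos_left (by linarith) (by linarith)
      constructor <;> nlinarith [ih.2]

lemma encode_mem_betaExpansions (hβ : 1 < β) (hmargin : 0 < margin β)
    (hx : x ∈ Ioo 0 (top β)) (σ : ℕ → Fin 2) : encode β x σ ∈ betaExpansions β x := by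
  have hβ₀ : 0 < β := by linarith
  have hrem : Tendsto (fun n => rem β x σ n / β ^ n) atTop (𝓝 0) := by
    have hgeom : Tendsto (fun n : ℕ => top β * β⁻¹ ^ n) atTop (𝓝 0) := by
      simpa using (tendsto_pow_atTop_nhds_zero_of_lt_one (inv_nonneg.2 hβ₀.le)
        (inv_lt_one_of_one_lt₀ hβ)).const_mul (top β)
    refine squeeze_zero (fun n => (div_pos (rem_mem_Ioo hβ hmargin hx n).1 (by positivity)).le)
      (fun n => ?_) hgeom
    rw [inv_pow, ← div_eq_mul_inv]
    exact div_le_div_of_nonneg_right (rem_mem_Ioo hβ hmargin hx n).2.le (by positivity)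
  refine ((hasSum_iff_tendsto_nat_of_nonneg (fun i => by positivity) x).2 ?_).tsum_eq
  simp only [sum_range_encode_div_pow hβ₀.ne']
  simpa using (tendsto_const_nhds (x := x)).sub hrem

lemma exists_mem_window_of_le_pow_mul (hβ : 1 < β) {k : ℕ} (h₁ : lo β ≤ β ^ k * rem β x σ n)
    (h₂ : lo β ≤ β ^ k * (top β - rem β x σ n)) :
    ∃ t ∈ Icc n (n + k), rem β x σ t ∈ window β := by
  induction k generalizing n with
  | zero =>
    refine ⟨n, ⟨le_rfl, le_rfl⟩, ?_, ?_⟩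
    · simpa using h₁
    · have := lo_add_hi hβ
      simp only [pow_zero, one_mul] at h₂
      linarith
  | succ k ih =>
    by_cases hw : rem β x σ n ∈ window β
    · exact ⟨n, ⟨le_rfl, by omega⟩, hw⟩
    have hlh := lo_add_hi hβ
    have hlo₀ := lo_pos hβ
    have hβk : 1 ≤ β ^ k := one_le_pow₀ hβ.le
    have hsucc : rem β x σ (n + 1) = next β (rem β x σ n) (σ (choices β x σ n)) := rfl
    suffices lo β ≤ β ^ k * rem β x σ (n + 1) ∧ lo β ≤ β ^ k * (top β - rem β x σ (n + 1)) by
      obtain ⟨t, ⟨ht₁, ht₂⟩, htw⟩ := ih this.1 this.2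
      exact ⟨t, ⟨by omega, by omega⟩, htw⟩
    rw [pow_succ] at h₁ h₂
    rcases lt_or_ge (rem β x σ n) (lo β) with hlo | hlo
    · have hβy : β * rem β x σ n < hi β := mul_lt_mul_of_pos_left hlo (by linarith)
      rw [hsucc, next_of_lt_lo hlo]
      have := le_mul_of_one_le_left (by linarith : 0 ≤ top β - β * rem β x σ n) hβk
      constructor <;> nlinarith
    · have hhi : hi β < rem β x σ n := not_le.1 fun h => hw ⟨hlo, h⟩
      have hβy : β * (top β - rem β x σ n) < hi β :=
        mul_lt_mul_of_pos_left (by linarith) (by linarith)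
      have := top_sub_next_of_hi_lt hβ hhi (σ (choices β x σ n))
      rw [← hsucc] at this
      have := le_mul_of_one_le_left (by linarith : 0 ≤ rem β x σ (n + 1)) hβk
      constructor <;> nlinarith

lemma exists_mem_window_le (hβ : 1 < β) (hx : x ∈ Ioo 0 (top β)) :
    ∃ N, ∀ σ, ∃ t ≤ N, rem β x σ t ∈ window β := by
  have hpow := tendsto_pow_atTop_atTop_of_one_lt hβ
  obtain ⟨k, hk₁, hk₂⟩ := ((hpow.eventually_ge_atTop (lo β / x)).and
    (hpow.eventually_ge_atTop (lo β / (top β - x)))).exists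
  refine ⟨k, fun σ => ?_⟩
  obtain ⟨t, ht, htw⟩ := exists_mem_window_of_le_pow_mul (n := 0) (σ := σ) hβ
    ((div_le_iff₀ hx.1).1 hk₁) ((div_le_iff₀ (sub_pos.2 hx.2)).1 hk₂)
  exact ⟨t, ht.2.trans (zero_add k).le, htw⟩

lemma exists_mem_window_of_mem_window (hβ : 1 < β) (hkey : lo β ≤ β ^ (m + 1) * margin β)
    (hn : rem β x σ n ∈ window β) : ∃ t ∈ Icc (n + 1) (n + (m + 2)), rem β x σ t ∈ window β := by
  obtain ⟨h₁, h₂⟩ := margin_le_next hβ hn (σ (choices β x σ n))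
  have hβm : 0 ≤ β ^ (m + 1) := by positivity
  obtain ⟨t, ⟨ht₁, ht₂⟩, htw⟩ :=
    exists_mem_window_of_le_pow_mul (n := n + 1) (k := m + 1) (σ := σ) hβ
      (hkey.trans (mul_le_mul_of_nonneg_left h₁ hβm))
      (hkey.trans (mul_le_mul_of_nonneg_left h₂ hβm))
  exact ⟨t, ⟨ht₁, by omega⟩, htw⟩

lemma choices_mono : Monotone (choices β x σ) :=
  monotone_nat_of_le_succ fun n => by rw [choices_succ]; exact Nat.le_add_right _ _

lemma choices_succ_of_mem_window (hn : rem β x σ n ∈ window β) :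
    choices β x σ (n + 1) = choices β x σ n + 1 := by
  rw [choices_succ, if_pos hn]

lemma exists_mem_window_le_add_mul (hβ : 1 < β) (hkey : lo β ≤ β ^ (m + 1) * margin β) {N : ℕ}
    (hN : ∃ t ≤ N, rem β x σ t ∈ window β) (k : ℕ) :
    ∃ t ≤ N + (m + 2) * k, rem β x σ t ∈ window β ∧ k ≤ choices β x σ t := by
  induction k with
  | zero =>
    obtain ⟨t, ht, htw⟩ := hN
    exact ⟨t, ht, htw, Nat.zero_le _⟩
  | succ k ih =>
    obtain ⟨t, ht, htw, hk⟩ := ih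
    obtain ⟨t', ⟨ht'₁, ht'₂⟩, ht'w⟩ := exists_mem_window_of_mem_window hβ hkey htw
    have := choices_succ_of_mem_window htw
    have := choices_mono (β := β) (x := x) (σ := σ) ht'₁
    exact ⟨t', by rw [mul_add]; omega, ht'w, by omega⟩

lemma le_mul_choices_add (hβ : 1 < β) (hkey : lo β ≤ β ^ (m + 1) * margin β) {N : ℕ}
    (hN : ∃ t ≤ N, rem β x σ t ∈ window β) (n : ℕ) : n ≤ (m + 2) * choices β x σ n + N := by
  obtain ⟨t, ht, htw, hc⟩ := exists_mem_window_le_add_mul hβ hkey hN (choices β x σ n)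
  by_contra! hn
  have := choices_succ_of_mem_window htw
  have := choices_mono (β := β) (x := x) (σ := σ) (show t + 1 ≤ n by omega)
  omega

lemma encode_of_mem_window (hn : rem β x σ n ∈ window β) :
    encode β x σ n = finTwoEquiv (σ (choices β x σ n)) := by
  simp [encode, digit, not_lt.2 hn.1, not_lt.2 hn.2]

lemma state_eq_of_encode_eq (h : ∀ i < n, encode β x σ i = encode β x τ i) :
    state β x σ n = state β x τ n := by
  induction n with
  | zero => rfl
  | succ n ih =>
    have ih := ih fun i hi => h i (by omega)
    have hrem : rem β x σ n = rem β x τ n := congrArg Prod.fst ih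
    have hch : choices β x σ n = choices β x τ n := congrArg Prod.snd ih
    refine Prod.ext ?_ ?_
    · change rem β x σ (n + 1) = rem β x τ (n + 1)
      rw [rem_succ, rem_succ, hrem, h n n.lt_succ_self]
    · change choices β x σ (n + 1) = choices β x τ (n + 1)
      rw [choices_succ, choices_succ, hrem, hch]

lemma eq_of_lt_choices_of_encode_eq (h : ∀ i < n, encode β x σ i = encode β x τ i) :
    ∀ j < choices β x σ n, σ j = τ j := by
  induction n with
  | zero => exact fun j hj => absurd hj (Nat.not_lt_zero j)
  | succ n ih =>
    have ih := ih fun i hi => h i (by omega)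
    by_cases hw : rem β x σ n ∈ window β
    · have hst := state_eq_of_encode_eq (n := n) fun i hi => h i (by omega)
      have hrem : rem β x σ n = rem β x τ n := congrArg Prod.fst hst
      have hch : choices β x σ n = choices β x τ n := congrArg Prod.snd hst
      have hlast : σ (choices β x σ n) = τ (choices β x σ n) := by
        have := h n n.lt_succ_self
        rwa [encode_of_mem_window hw, encode_of_mem_window (hrem ▸ hw), ← hch,
          finTwoEquiv.apply_eq_iff_eq] at this
      intro j hj
      rw [choices_succ_of_mem_window hw] at hj
      rcases Nat.lt_succ_iff_lt_or_eq.1 hj with hj | rfl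
      exacts [ih j hj, hlast]
    · rw [choices_succ, if_neg hw, add_zero]
      exact ih

lemma abs_ofDigits_sub_le (hβ : 1 < β) (hkey : lo β ≤ β ^ (m + 1) * margin β) {N : ℕ}
    (hN : ∀ σ, ∃ t ≤ N, rem β x σ t ∈ window β)
    (h : ∀ i < n, encode β x σ i = encode β x τ i) :
    |Real.ofDigits σ - Real.ofDigits τ| ≤
      2 ^ ((N : ℝ) / (m + 2 : ℕ)) * ((1 / 2 : ℝ) ^ n) ^ (((m + 2 : ℕ) : ℝ)⁻¹) :=
  calc |Real.ofDigits σ - Real.ofDigits τ| ≤ (((2 : ℕ) : ℝ) ^ choices β x σ n)⁻¹ :=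
        Real.abs_ofDigits_sub_ofDigits_le (eq_of_lt_choices_of_encode_eq h)
    _ ≤ _ := by
        rw [Nat.cast_ofNat]
        exact inv_two_pow_le_of_le_mul_add (by omega) (le_mul_choices_add hβ hkey (hN σ) n)

end Trajectory

end BetaCoding

open BetaCoding

theorem dimH_betaExpansions_ge_of_le_lambda
    (m : ℕ) (hm : 0 < m) (lam : ℝ)
    (hlam : IsSmallestRootGT1 (fun y => y ^ (m + 3) - y ^ (m + 2) - y ^ (m + 1) + 1) lam)
    (β : ℝ) (hβ : 1 < β) (hβlam : β ≤ lam)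
    (x : ℝ) (hx : x ∈ Set.Ioo 0 (1 / (β - 1))) :
    (1 : ℝ≥0∞) / ((m + 2 : ℕ) : ℝ≥0∞) ≤ dimH (betaExpansions β x) := by
  have hkey := lo_le_pow_mul_margin hβ (lambdaPoly_nonpos_of_le hm hlam hβ hβlam)
  have hmargin : 0 < margin β :=
    pos_of_mul_pos_right ((lo_pos hβ).trans_le hkey) (by positivity)
  obtain ⟨N, hN⟩ := exists_mem_window_le hβ hx
  have hholder := edist_le_of_forall_eq_of_lt (e := encode β x) (v := Real.ofDigits)
    (C := 2 ^ ((N : ℝ) / (m + 2 : ℕ))) (r := ((m + 2 : ℕ) : ℝ≥0)⁻¹) (by positivity)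
    fun σ τ n h => by simpa using abs_ofDigits_sub_le hβ hkey hN h
  have hinterior : (interior (range (Real.ofDigits (b := 2)))).Nonempty := by
    refine ⟨1 / 2, interior_mono ?_ (show (1 / 2 : ℝ) ∈ interior (Icc 0 1) by
      rw [interior_Icc]; norm_num)⟩
    simpa [SurjOn] using Real.ofDigits_SurjOn one_lt_two
  calc (1 : ℝ≥0∞) / ((m + 2 : ℕ) : ℝ≥0∞) = (((m + 2 : ℕ) : ℝ≥0)⁻¹ : ℝ≥0) := by
        rw [ENNReal.coe_inv (by positivity), one_div, ENNReal.coe_natCast]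
    _ ≤ dimH (range (encode β x)) := le_dimH_range_of_edist_le (by positivity) hholder hinterior
    _ ≤ dimH (betaExpansions β x) :=
        dimH_mono (range_subset_iff.2 (encode_mem_betaExpansions hβ hmargin hx))
end

section
/- Let β > 1, let k be a natural number, and let (a_1,…,a_{2k+1}) be a (2k+1)-tuple of maps from {T_{0,β}, T_{1,β}}. If at least k+1 of the a_n equal T_{0,β}, then for all real x, a_{2k+1} ∘ ⋯ ∘ a_1(x) ≥ (T_{0,β}^{k+1} ∘ T_{1,β}^{k})(x). If at least k+1 of the a_n equal T_{1,β}, then for all real x, a_{2k+1} ∘ ⋯ ∘ a_1(x) ≤ (T_{1,β}^{k+1} ∘ T_{0,β}^{k})(x). -/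
/-- `Tmap β false = T_{0,β} : y ↦ βy` and `Tmap β true = T_{1,β} : y ↦ βy - 1`. -/
def Tmap (β : ℝ) (b : Bool) : ℝ → ℝ := fun y => β * y - if b then 1 else 0

/-- For a tuple `a = (a_1, …, a_j)` of maps from `{T_{0,β}, T_{1,β}}` (encoded by
booleans), `compTuple β a x = a_j ∘ ⋯ ∘ a_1 (x)`: the maps are applied in order of
increasing index. -/
def compTuple (β : ℝ) {j : ℕ} (a : Fin j → Bool) (x : ℝ) : ℝ :=
  (List.ofFn fun i => Tmap β (a i)).foldl (fun y f => f y) x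

/-! `compTuple β a` is the affine map `x ↦ β ^ n x - ∑_{a_i = 1} β ^ (n - 1 - i)`, so both bounds
are inequalities between sums of distinct powers `β ^ e`, `e < 2k + 1`. Since the `m`-th smallest
element of a set of naturals is at least `m` and `e ↦ β ^ e` is increasing, a set of at least
`k + 1` exponents has sum at least `1 + β + ⋯ + β ^ k`. Applied to the exponents of the `T_1`
positions this is the upper bound; applied to the exponents of the `T_0` positions, which are the
complement of the `T_1` exponents in `{0, …, 2k}`, it is the lower bound. -/

open Finset

theorem Finset.sum_range_card_le_sum_of_monotone {M : Type*} [AddCommMonoid M] [PartialOrder M]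
    [IsOrderedAddMonoid M] {f : ℕ → M} (hf : Monotone f) (s : Finset ℕ) :
    ∑ i ∈ range #s, f i ≤ ∑ i ∈ s, f i := by
  induction s using Finset.induction_on_max with
  | empty => simp
  | insert a s hlt ih =>
    have ha : a ∉ s := fun h => lt_irrefl a (hlt a h)
    have hcard : #s ≤ a := by simpa using card_le_card fun x hx => mem_range.mpr (hlt x hx)
    rw [card_insert_of_notMem ha, sum_range_succ, sum_insert ha, add_comm (f a)]
    exact add_le_add ih (hf hcard)

lemma compTuple_succ (β : ℝ) {j : ℕ} (a : Fin (j + 1) → Bool) (x : ℝ) :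
    compTuple β a x = compTuple β (fun i => a i.succ) (Tmap β (a 0) x) := by
  simp [compTuple, List.ofFn_succ]

lemma compTuple_eq_sub_sum (β : ℝ) {j : ℕ} (a : Fin j → Bool) (x : ℝ) :
    compTuple β a x = β ^ j * x - ∑ i : Fin j, if a i then β ^ (i.rev : ℕ) else 0 := by
  induction j generalizing x with
  | zero => simp [compTuple]
  | succ j ih =>
    rw [compTuple_succ, ih, Fin.sum_univ_succ]
    simp only [Fin.rev_succ, Fin.val_castSucc, Fin.rev_zero, Fin.val_last]
    cases a 0 <;> simp only [Tmap, if_true, if_false, Bool.false_eq_true] <;> ring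

lemma iterate_mul_sub_one_apply (β : ℝ) (m : ℕ) (x : ℝ) :
    (fun y : ℝ => β * y - 1)^[m] x = β ^ m * x - ∑ e ∈ range m, β ^ e := by
  induction m with
  | zero => simp
  | succ m ih =>
    rw [Function.iterate_succ_apply', ih, sum_range_succ', mul_sub, mul_sum, pow_succ']
    simp only [pow_succ']
    ring

lemma geom_sum_le_sum_pow_rev {β : ℝ} (hβ : 1 ≤ β) {n m : ℕ} {s : Finset (Fin n)}
    (hm : m ≤ #s) : ∑ e ∈ range m, β ^ e ≤ ∑ i ∈ s, β ^ (i.rev : ℕ) := by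
  have hcard : ∑ e ∈ range #s, β ^ e ≤ ∑ i ∈ s, β ^ (i.rev : ℕ) := by
    simpa using sum_range_card_le_sum_of_monotone (pow_right_mono₀ hβ)
      (s.map (Fin.revPerm.toEmbedding.trans Fin.valEmbedding))
  exact (sum_le_sum_of_subset_of_nonneg (range_subset_range.mpr hm)
    fun e _ _ => by positivity).trans hcard

lemma sum_pow_rev_filter_add (β : ℝ) {n : ℕ} (a : Fin n → Bool) :
    ∑ i with a i = true, β ^ (i.rev : ℕ) + ∑ i with a i = false, β ^ (i.rev : ℕ) =
      ∑ e ∈ range n, β ^ e := by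
  simp only [← Bool.not_eq_true, sum_filter_add_sum_filter_not]
  rw [← Fin.sum_univ_eq_sum_range, ← Equiv.sum_comp Fin.revPerm]
  simp only [Fin.revPerm_apply, Fin.rev_rev]

theorem compTuple_extremal_bounds (β : ℝ) (hβ : 1 < β) (k : ℕ)
    (a : Fin (2 * k + 1) → Bool) :
    (k + 1 ≤ (Finset.univ.filter fun i => a i = false).card →
      ∀ x : ℝ,
        (fun y : ℝ => β * y)^[k + 1] ((fun y : ℝ => β * y - 1)^[k] x) ≤ compTuple β a x) ∧
    (k + 1 ≤ (Finset.univ.filter fun i => a i = true).card →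
      ∀ x : ℝ,
        compTuple β a x ≤ (fun y : ℝ => β * y - 1)^[k + 1] ((fun y : ℝ => β * y)^[k] x)) := by
  have hsplit : ∑ e ∈ range (2 * k + 1), β ^ e =
      ∑ e ∈ range (k + 1), β ^ e + β ^ (k + 1) * ∑ e ∈ range k, β ^ e := by
    rw [show 2 * k + 1 = (k + 1) + k by ring, sum_range_add, mul_sum]
    simp only [pow_add]
  have hpow : β ^ (2 * k + 1) = β ^ (k + 1) * β ^ k := by rw [← pow_add]; ring_nf
  have htotal := sum_pow_rev_filter_add β a
  refine ⟨fun hfalse x => ?_, fun htrue x => ?_⟩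
  · rw [mul_left_iterate_apply, iterate_mul_sub_one_apply, compTuple_eq_sub_sum, ← sum_filter,
      mul_sub, ← mul_assoc, ← hpow]
    linarith [geom_sum_le_sum_pow_rev hβ.le hfalse]
  · rw [mul_left_iterate_apply, iterate_mul_sub_one_apply, compTuple_eq_sub_sum, ← sum_filter,
      ← mul_assoc, ← hpow]
    linarith [geom_sum_le_sum_pow_rev hβ.le htrue]
end

section
/- For every positive integer m and every real β with 1 < β ≤ ω_m, one has β^{4m+3} - β^{2m+2} - β^{m+2} - β^{m+1} + β + 1 ≤ 0. -/
open Set Filter Topology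

theorem HasDerivAt.exists_lt_of_neg {f : ℝ → ℝ} {f' a b : ℝ} (hd : HasDerivAt f f' a)
    (hf' : f' < 0) (hab : a < b) : ∃ t ∈ Ioo a b, f t < f a := by
  have hslope : Tendsto (slope f a) (𝓝[>] a) (𝓝 f') :=
    (hasDerivAt_iff_tendsto_slope.mp hd).mono_left (nhdsWithin_mono a fun _ hx => ne_of_gt hx)
  obtain ⟨t, hneg, ht⟩ :=
    ((hslope.eventually_lt_const hf').and (Ioo_mem_nhdsGT_of_mem ⟨le_rfl, hab⟩)).exists
  refine ⟨t, ht, ?_⟩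
  rw [slope_def_field, div_neg_iff] at hneg
  rcases hneg with ⟨-, hta⟩ | ⟨hft, -⟩
  · linarith [ht.1]
  · linarith

theorem nonpos_of_hasDerivAt_neg_of_le_first_root {f : ℝ → ℝ} {f' a r β : ℝ}
    (hf : ContinuousOn f (Icc a β)) (hfa : f a = 0) (hd : HasDerivAt f f' a) (hf' : f' < 0)
    (hr : ∀ y, a < y → f y = 0 → r ≤ y) (hβ : a < β) (hβr : β ≤ r) : f β ≤ 0 := by
  by_contra! hfβ
  obtain ⟨t, ⟨hat, htβ⟩, hft⟩ := hd.exists_lt_of_neg hf' hβ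
  obtain ⟨c, ⟨htc, hcβ⟩, hfc⟩ := intermediate_value_Ioo htβ.le
    (hf.mono (Icc_subset_Icc_left hat.le)) ⟨hfa ▸ hft, hfβ⟩
  linarith [hr c (hat.trans htc) hfc]

theorem hasDerivAt_P₁_one (m : ℕ) :
    HasDerivAt
      (fun y : ℝ => y ^ (4 * m + 3) - y ^ (2 * m + 2) - y ^ (m + 2) - y ^ (m + 1) + y + 1)
      (-1) 1 :=
  (((((hasDerivAt_pow (4 * m + 3) (1 : ℝ)).fun_sub (hasDerivAt_pow (2 * m + 2) 1)).fun_sub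
    (hasDerivAt_pow (m + 2) 1)).fun_sub (hasDerivAt_pow (m + 1) 1)).fun_add
    (hasDerivAt_id' 1)).add_const 1 |>.congr_deriv (by simp only [one_pow, mul_one]; push_cast; ring)

theorem poly_nonpos_of_le_omega_general (m : ℕ) (ω₁ ω₂ ω₃ : ℝ)
    (h₁ : IsSmallestRootGT1
      (fun y => y ^ (4 * m + 3) - y ^ (2 * m + 2) - y ^ (m + 2) - y ^ (m + 1) + y + 1) ω₁)
    (β : ℝ) (hβ : 1 < β) (hβω : β ≤ min ω₁ (min ω₂ ω₃)) :
    β ^ (4 * m + 3) - β ^ (2 * m + 2) - β ^ (m + 2) - β ^ (m + 1) + β + 1 ≤ 0 := by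
  have hP₁ := nonpos_of_hasDerivAt_neg_of_le_first_root (by fun_prop) (by norm_num)
    (hasDerivAt_P₁_one m) (by norm_num) h₁.2.2 hβ (hβω.trans (min_le_left _ _))
  exact hP₁

theorem poly_nonpos_of_le_omega (m : ℕ) (hm : 0 < m) (ω₁ ω₂ ω₃ : ℝ)
    (h₁ : IsSmallestRootGT1
      (fun y => y ^ (4 * m + 3) - y ^ (2 * m + 2) - y ^ (m + 2) - y ^ (m + 1) + y + 1) ω₁)
    (h₂ : IsSmallestRootGT1 (fun y => y ^ (2 * m + 3) - y ^ (2 * m + 2) - y ^ 2 + 1) ω₂)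
    (h₃ : IsSmallestRootGT1 (fun y => y ^ (2 * m + 3) - y - 1) ω₃)
    (β : ℝ) (hβ : 1 < β) (hβω : β ≤ min ω₁ (min ω₂ ω₃)) :
    β ^ (4 * m + 3) - β ^ (2 * m + 2) - β ^ (m + 2) - β ^ (m + 1) + β + 1 ≤ 0 :=
  poly_nonpos_of_le_omega_general m ω₁ ω₂ ω₃ h₁ β hβ hβω
end

section
/- For every positive integer m and every real β with 1 < β ≤ ω_m, the (2m+1)-th iterate of T_{1,β}(x) = βx - 1 satisfies T_{1,β}^{2m+1}(β/(β²-1)) = (-β^{2m+1} + β + 1)/(β²-1), and moreover (-β^{2m+1} + β + 1)/(β²-1) ≥ 0, i.e. this point lies in [0, 1/(β-1)]. -/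
/-
The orbit of `β / (β² - 1)` under `y ↦ β y - 1` is `1/(β - 1) - β^n/(β² - 1)`: the point sits at
distance `1/(β² - 1)` below the repelling fixed point `1/(β - 1)`, and that distance is scaled by
`β` at each step. It stays nonnegative up to time `2m + 1` because `β^(2m+1) ≤ β + 1` whenever
`β` does not exceed the root `ω₃ > 1` of `y^(2m+3) = y + 1`, as `y ↦ y^(2m+1) - y` is increasing
on `[1, ∞)` and `ω₃^(2m+1) ≤ ω₃^(2m+3)`.
-/

lemma iterate_mul_sub_one_apply_div {β : ℝ} (hβ : β ^ 2 - 1 ≠ 0) (n : ℕ) :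
    (fun y : ℝ => β * y - 1)^[n] (β / (β ^ 2 - 1)) = (-β ^ n + β + 1) / (β ^ 2 - 1) := by
  induction n with
  | zero => simp
  | succ n ih =>
    rw [Function.iterate_succ_apply', ih]
    field_simp
    ring

lemma pow_succ_sub_self_le {R : Type*} [CommRing R] [LinearOrder R] [IsStrictOrderedRing R]
    {a b : R} (k : ℕ) (ha : 1 ≤ a) (hab : a ≤ b) : a ^ (k + 1) - a ≤ b ^ (k + 1) - b := by
  have hpow : a ^ k ≤ b ^ k := pow_le_pow_left₀ (zero_le_one.trans ha) hab k
  have hone : 1 ≤ a ^ k := one_le_pow₀ ha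
  rw [pow_succ, pow_succ]
  nlinarith

lemma pow_le_add_one_of_le_root {β ω : ℝ} (k : ℕ) (hω : 1 < ω) (hroot : ω ^ (k + 2) = ω + 1)
    (hβ : 1 ≤ β) (hβω : β ≤ ω) : β ^ k ≤ β + 1 := by
  cases k with
  | zero => linarith
  | succ k =>
    have hmono := pow_succ_sub_self_le k hβ hβω
    have hgrow : ω ^ (k + 1) ≤ ω ^ (k + 1 + 2) := pow_le_pow_right₀ hω.le (by omega)
    linarith

theorem iterate_T1_mem_of_le_omega_general (m : ℕ) (ω₁ ω₂ ω₃ : ℝ)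
    (h₃ : IsSmallestRootGT1 (fun y => y ^ (2 * m + 3) - y - 1) ω₃)
    (β : ℝ) (hβ : 1 < β) (hβω : β ≤ min ω₁ (min ω₂ ω₃)) :
    (fun y : ℝ => β * y - 1)^[2 * m + 1] (β / (β ^ 2 - 1)) =
        (-β ^ (2 * m + 1) + β + 1) / (β ^ 2 - 1) ∧
      0 ≤ (-β ^ (2 * m + 1) + β + 1) / (β ^ 2 - 1) := by
  obtain ⟨hω₃, hroot, -⟩ := h₃
  have hden : 0 < β ^ 2 - 1 := by nlinarith
  refine ⟨iterate_mul_sub_one_apply_div hden.ne' _, div_nonneg ?_ hden.le⟩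
  have hβω₃ : β ≤ ω₃ := hβω.trans ((min_le_right _ _).trans (min_le_right _ _))
  have hroot' : ω₃ ^ (2 * m + 1 + 2) = ω₃ + 1 := by linarith [hroot]
  linarith [pow_le_add_one_of_le_root (2 * m + 1) hω₃ hroot' hβ.le hβω₃]

theorem iterate_T1_mem_of_le_omega (m : ℕ) (hm : 0 < m) (ω₁ ω₂ ω₃ : ℝ)
    (h₁ : IsSmallestRootGT1
      (fun y => y ^ (4 * m + 3) - y ^ (2 * m + 2) - y ^ (m + 2) - y ^ (m + 1) + y + 1) ω₁)
    (h₂ : IsSmallestRootGT1 (fun y => y ^ (2 * m + 3) - y ^ (2 * m + 2) - y ^ 2 + 1) ω₂)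
    (h₃ : IsSmallestRootGT1 (fun y => y ^ (2 * m + 3) - y - 1) ω₃)
    (β : ℝ) (hβ : 1 < β) (hβω : β ≤ min ω₁ (min ω₂ ω₃)) :
    (fun y : ℝ => β * y - 1)^[2 * m + 1] (β / (β ^ 2 - 1)) =
        (-β ^ (2 * m + 1) + β + 1) / (β ^ 2 - 1) ∧
      0 ≤ (-β ^ (2 * m + 1) + β + 1) / (β ^ 2 - 1) :=
  iterate_T1_mem_of_le_omega_general m ω₁ ω₂ ω₃ h₃ β hβ hβω
end

section
/- The sequence (ω_m)_{m≥1} is strictly decreasing and converges to 1. -/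
/-!
A root `x > 1` of `P¹_m` or of `P³_m` satisfies `P¹_n(x) > 0` for every `n > m`, and a root
`x > 1` of `P²_m` satisfies `P³_m(x) > 0`. As `P¹_n` and `P³_m` are negative just to the right
of `1`, the intermediate value theorem turns these sign conditions into
`ω¹_n < min(ω¹_m, ω³_m)` and `ω³_m < ω²_m`, whence `ω_n ≤ ω¹_n < ω_m`. For fixed `b > 1`,
`P³_m(b) > 0` once `m` is large, so `1 < ω_m ≤ ω³_m < b` eventually.
-/

open Set Filter Topology

theorem eventually_nhdsGT_neg_of_hasDerivAt {f : ℝ → ℝ} {f' x : ℝ} (hf : HasDerivAt f f' x)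
    (hf' : f' < 0) (hx : f x = 0) : ∀ᶠ t in 𝓝[>] x, f t < 0 := by
  filter_upwards [(hasDerivAt_iff_tendsto_slope_left_right.mp hf).2.eventually
    (eventually_lt_nhds hf'), self_mem_nhdsWithin] with t hslope (ht : x < t)
  rwa [slope_def_field, hx, sub_zero, div_lt_iff₀ (sub_pos.2 ht), zero_mul] at hslope

theorem IsSmallestRootGT1.lt_of_pos {P : ℝ → ℝ} {r b : ℝ} (hr : IsSmallestRootGT1 P r)
    (hP : Continuous P) (hneg : ∀ᶠ t in 𝓝[>] 1, P t < 0) (hb : 1 < b) (hPb : 0 < P b) :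
    r < b := by
  obtain ⟨t, hPt, ht⟩ := (hneg.and (Ioo_mem_nhdsGT hb)).exists
  obtain ⟨c, hc, hPc⟩ := intermediate_value_Ioo ht.2.le hP.continuousOn ⟨hPt, hPb⟩
  exact (hr.2.2 c (ht.1.trans hc.1) hPc).trans_lt hc.2

theorem pow_sub_pow_lt_pow_sub_pow {R : Type*} [CommRing R] [LinearOrder R]
    [IsStrictOrderedRing R] {x : R} (hx : 1 < x) {a b c d : ℕ} (hdc : d < c) (hdb : d < b)
    (h : c + b ≤ a + d) : x ^ c - x ^ d < x ^ a - x ^ b := by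
  obtain ⟨p, rfl⟩ := Nat.exists_eq_add_of_lt hdc
  obtain ⟨q, rfl⟩ := Nat.exists_eq_add_of_le (show b + (p + 1) ≤ a by omega)
  have hp : 0 < x ^ (p + 1) - 1 := sub_pos.2 (one_lt_pow₀ hx p.succ_ne_zero)
  calc x ^ (d + p + 1) - x ^ d = x ^ d * (x ^ (p + 1) - 1) := by ring
    _ < x ^ b * (x ^ (p + 1) - 1) := mul_lt_mul_of_pos_right (pow_lt_pow_right₀ hx hdb) hp
    _ ≤ x ^ b * (x ^ (p + 1 + q) - 1) := by
      gcongr ?_ * (?_ - _)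
      exact pow_le_pow_right₀ hx.le (by omega)
    _ = x ^ (b + (p + 1) + q) - x ^ b := by ring

def P₁ (m : ℕ) (y : ℝ) : ℝ := y ^ (4 * m + 3) - y ^ (2 * m + 2) - y ^ (m + 2) - y ^ (m + 1) + y + 1

def P₂ (m : ℕ) (y : ℝ) : ℝ := y ^ (2 * m + 3) - y ^ (2 * m + 2) - y ^ 2 + 1

def P₃ (m : ℕ) (y : ℝ) : ℝ := y ^ (2 * m + 3) - y - 1

theorem continuous_P₁ (m : ℕ) : Continuous (P₁ m) := by unfold P₁; fun_prop

theorem continuous_P₃ (m : ℕ) : Continuous (P₃ m) := by unfold P₃; fun_prop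

theorem hasDerivAt_P₁_one_s11 (m : ℕ) : HasDerivAt (P₁ m) (-1) 1 := by
  have h := (((((hasDerivAt_pow (4 * m + 3) (1 : ℝ)).sub (hasDerivAt_pow (2 * m + 2) 1)).sub
    (hasDerivAt_pow (m + 2) 1)).sub (hasDerivAt_pow (m + 1) 1)).add (hasDerivAt_id 1)).add_const 1
  refine h.congr_deriv ?_
  simp only [one_pow, mul_one]
  push_cast
  ring

theorem eventually_P₁_neg_nhdsGT_one (m : ℕ) : ∀ᶠ t in 𝓝[>] 1, P₁ m t < 0 :=
  eventually_nhdsGT_neg_of_hasDerivAt (hasDerivAt_P₁_one_s11 m) (by norm_num) (by norm_num [P₁])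

theorem eventually_P₃_neg_nhdsGT_one (m : ℕ) : ∀ᶠ t in 𝓝[>] 1, P₃ m t < 0 :=
  (((continuous_P₃ m).tendsto 1).eventually (eventually_lt_nhds (by norm_num [P₃]))).filter_mono
    nhdsWithin_le_nhds

theorem P₁_pos_of_P₃_eq_zero {x : ℝ} (hx : 1 < x) {m n : ℕ} (hmn : m < n) (hroot : P₃ m x = 0) :
    0 < P₁ n x := by
  have hP₁ : P₁ n x =
      (x ^ (4 * n + 3) - x ^ (n + 2 * m + 4)) - (x ^ (2 * n + 2) - x ^ (2 * m + 3)) := by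
    unfold P₁; unfold P₃ at hroot; linear_combination (x ^ (n + 1) - 1) * hroot
  rw [hP₁, sub_pos]
  exact pow_sub_pow_lt_pow_sub_pow hx (by omega) (by omega) (by omega)

theorem P₁_pos_of_P₁_eq_zero {x : ℝ} (hx : 1 < x) {m n : ℕ} (hmn : m < n) (hroot : P₁ m x = 0) :
    0 < P₁ n x := by
  obtain ⟨d, rfl⟩ := Nat.exists_eq_add_of_lt hmn
  set t := x ^ (d + 1)
  set M := x ^ (4 * m + 3)
  have ht : 1 < t := one_lt_pow₀ hx d.succ_ne_zero
  have hM : 0 < M := by positivity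
  -- `P¹_n(x) - P¹_m(x)` expanded in `t = x ^ (n - m)`; each coefficient is at most `x ^ (4m+3)`
  have hP₁ : P₁ (m + d + 1) x =
      M * (t ^ 4 - 1) - x ^ (2 * m + 2) * (t ^ 2 - 1) - (x ^ (m + 2) + x ^ (m + 1)) * (t - 1) := by
    unfold P₁; unfold P₁ at hroot; linear_combination hroot
  calc 0 < M * ((t - 1) * (t ^ 3 + t ^ 2 - 2)) := by
        have : 0 < t ^ 3 + t ^ 2 - 2 := by nlinarith
        positivity
    _ = M * (t ^ 4 - 1) - M * (t ^ 2 - 1) - (M + M) * (t - 1) := by ring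
    _ ≤ P₁ (m + d + 1) x := by
        rw [hP₁]
        gcongr
        · nlinarith
        all_goals exact pow_le_pow_right₀ hx.le (by omega)

theorem P₃_pos_of_P₂_eq_zero {x : ℝ} (hx : 1 < x) {m : ℕ} (hroot : P₂ m x = 0) : 0 < P₃ m x := by
  have hfactor : (x - 1) * (x ^ (2 * m + 2) - x - 1) = 0 := by
    unfold P₂ at hroot; linear_combination hroot
  have hpow : x ^ (2 * m + 2) = x + 1 := by
    linear_combination (mul_eq_zero.1 hfactor).resolve_left (sub_ne_zero.2 hx.ne')
  have hP₃ : P₃ m x = x ^ 2 - 1 := by unfold P₃; linear_combination x * hpow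
  rw [hP₃]
  nlinarith

theorem eventually_P₃_pos_atTop {b : ℝ} (hb : 1 < b) : ∀ᶠ m in atTop, 0 < P₃ m b := by
  filter_upwards [(tendsto_pow_atTop_atTop_of_one_lt hb).eventually_ge_atTop (b + 1)] with m hm
  have : b ^ m < b ^ (2 * m + 3) := pow_lt_pow_right₀ hb (by omega)
  unfold P₃
  linarith

theorem tendsto_one_of_isSmallestRootGT1_P₃ {r : ℕ → ℝ}
    (hr : ∀ᶠ m in atTop, IsSmallestRootGT1 (P₃ m) (r m)) : Tendsto r atTop (𝓝 1) := by
  refine tendsto_order.2 ⟨fun a ha => hr.mono fun m hm => ha.trans hm.1, fun b hb => ?_⟩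
  filter_upwards [hr, eventually_P₃_pos_atTop hb] with m hm hPb
  exact hm.lt_of_pos (continuous_P₃ m) (eventually_P₃_neg_nhdsGT_one m) hb hPb

/-- If `ω m` is, for each `m ≥ 1`, the minimum of the smallest roots greater than 1 of the
three polynomials `P¹_m, P²_m, P³_m`, then `(ω_m)_{m ≥ 1}` is strictly decreasing and
converges to 1. -/
theorem omega_strictAnti_tendsto_one (ω : ℕ → ℝ)
    (h : ∀ m : ℕ, 1 ≤ m → ∃ ω₁ ω₂ ω₃ : ℝ,
      IsSmallestRootGT1
        (fun y => y ^ (4 * m + 3) - y ^ (2 * m + 2) - y ^ (m + 2) - y ^ (m + 1) + y + 1) ω₁ ∧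
      IsSmallestRootGT1 (fun y => y ^ (2 * m + 3) - y ^ (2 * m + 2) - y ^ 2 + 1) ω₂ ∧
      IsSmallestRootGT1 (fun y => y ^ (2 * m + 3) - y - 1) ω₃ ∧
      ω m = min ω₁ (min ω₂ ω₃)) :
    (∀ m n : ℕ, 1 ≤ m → m < n → ω n < ω m) ∧
      Filter.Tendsto ω Filter.atTop (nhds 1) := by
  choose! ω₁ ω₂ ω₃ h₁ h₂ h₃ hω using h
  refine ⟨fun m n hm hmn => ?_, ?_⟩
  · have hn : 1 ≤ n := by omega
    have h₁₁ : ω₁ n < ω₁ m := (h₁ n hn).lt_of_pos (continuous_P₁ n)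
      (eventually_P₁_neg_nhdsGT_one n) (h₁ m hm).1
      (P₁_pos_of_P₁_eq_zero (h₁ m hm).1 hmn (h₁ m hm).2.1)
    have h₁₃ : ω₁ n < ω₃ m := (h₁ n hn).lt_of_pos (continuous_P₁ n)
      (eventually_P₁_neg_nhdsGT_one n) (h₃ m hm).1
      (P₁_pos_of_P₃_eq_zero (h₃ m hm).1 hmn (h₃ m hm).2.1)
    have h₃₂ : ω₃ m < ω₂ m := (h₃ m hm).lt_of_pos (continuous_P₃ m)
      (eventually_P₃_neg_nhdsGT_one m) (h₂ m hm).1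
      (P₃_pos_of_P₂_eq_zero (h₂ m hm).1 (h₂ m hm).2.1)
    rw [hω n hn, hω m hm]
    exact (min_le_left _ _).trans_lt (lt_min h₁₁ (lt_min (h₁₃.trans h₃₂) h₁₃))
  · have hpos : ∀ᶠ m in atTop, 1 ≤ m := eventually_ge_atTop 1
    refine tendsto_of_tendsto_of_tendsto_of_le_of_le' tendsto_const_nhds
      (tendsto_one_of_isSmallestRootGT1_P₃ (hpos.mono h₃)) (hpos.mono fun m hm => ?_)
      (hpos.mono fun m hm => ?_) <;> rw [hω m hm]
    · exact (lt_min (h₁ m hm).1 (lt_min (h₂ m hm).1 (h₃ m hm).1)).le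
    · exact (min_le_right _ _).trans (min_le_right _ _)
end

section
/- For every positive integer m and every real β with 1 < β ≤ λ_m, the (m+1)-th iterates satisfy T_{0,β}^{m+1}((1+β-β²)/(β²-1)) ≥ 1/(β²-1) and T_{1,β}^{m+1}(β²/(β²-1)) ≤ β/(β²-1). -/
open Set Finset

theorem iterate_mul_sub_apply_of_isFixedPt {R : Type*} [CommRing R] (a b p x : R) (hp : a * p - b = p)
    (n : ℕ) : (fun y => a * y - b)^[n] x = p + a ^ n * (x - p) := by
  induction n with
  | zero => simp
  | succ n ih =>
    rw [Function.iterate_succ_apply', ih]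
    linear_combination hp

theorem ContinuousOn.nonpos_of_neg_of_forall_ne_zero {f : ℝ → ℝ} {a b : ℝ} (hab : a ≤ b)
    (hf : ContinuousOn f (Icc a b)) (ha : f a < 0) (hzero : ∀ c ∈ Ioo a b, f c ≠ 0) :
    f b ≤ 0 := by
  by_contra! hb
  obtain ⟨c, hc, hfc⟩ := intermediate_value_Ioo hab hf ⟨ha, hb⟩
  exact hzero c hc hfc

theorem pow_add_three_sub_eq_mul (m : ℕ) (x : ℝ) :
    x ^ (m + 3) - x ^ (m + 2) - x ^ (m + 1) + 1
      = (x - 1) * (x ^ (m + 2) - ∑ i ∈ range (m + 1), x ^ i) := by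
  linear_combination geom_sum_mul x (m + 1)

theorem pow_add_three_sub_nonpos (m : ℕ) (hm : 0 < m) (lam : ℝ)
    (hlam : IsSmallestRootGT1 (fun y => y ^ (m + 3) - y ^ (m + 2) - y ^ (m + 1) + 1) lam)
    (β : ℝ) (hβ : 1 ≤ β) (hβlam : β ≤ lam) :
    β ^ (m + 3) - β ^ (m + 2) - β ^ (m + 1) + 1 ≤ 0 := by
  set Q : ℝ → ℝ := fun x => x ^ (m + 2) - ∑ i ∈ range (m + 1), x ^ i
  have hQ1 : Q 1 < 0 := by
    have : (1 : ℝ) ≤ m := by exact_mod_cast hm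
    simp only [Q, one_pow, sum_const, card_range, nsmul_eq_mul, mul_one]
    push_cast
    linarith
  have hQβ : Q β ≤ 0 := by
    refine ContinuousOn.nonpos_of_neg_of_forall_ne_zero hβ (by fun_prop) hQ1 ?_
    intro c ⟨hc1, hcβ⟩ hQc
    have hroot := hlam.2.2 c hc1 (by simp only [pow_add_three_sub_eq_mul, hQc, Q, mul_zero])
    linarith
  rw [pow_add_three_sub_eq_mul]
  exact mul_nonpos_of_nonneg_of_nonpos (by linarith) hQβ

theorem iterate_bounds_of_le_lambda (m : ℕ) (hm : 0 < m) (lam : ℝ)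
    (hlam : IsSmallestRootGT1 (fun y => y ^ (m + 3) - y ^ (m + 2) - y ^ (m + 1) + 1) lam)
    (β : ℝ) (hβ : 1 < β) (hβlam : β ≤ lam) :
    1 / (β ^ 2 - 1) ≤ (fun y : ℝ => β * y)^[m + 1] ((1 + β - β ^ 2) / (β ^ 2 - 1)) ∧
      (fun y : ℝ => β * y - 1)^[m + 1] (β ^ 2 / (β ^ 2 - 1)) ≤ β / (β ^ 2 - 1) := by
  have hP : β ^ (m + 1) * (β ^ 2 - β - 1) ≤ -1 := by
    linear_combination pow_add_three_sub_nonpos m hm lam hlam β hβ.le hβlam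
  have hd : 0 < β ^ 2 - 1 := by nlinarith
  have hfix : β * ((β + 1) / (β ^ 2 - 1)) - 1 = (β + 1) / (β ^ 2 - 1) := by
    field_simp
    ring
  constructor
  · rw [mul_left_iterate_apply, mul_div_assoc', div_le_div_iff_of_pos_right hd]
    linarith
  · rw [iterate_mul_sub_apply_of_isFixedPt β 1 _ _ hfix, div_sub_div_same, mul_div_assoc', ← add_div,
      div_le_div_iff_of_pos_right hd]
    linarith
end

section
/- The sequence (λ_m)_{m≥1} is strictly increasing and converges to (1+√5)/2. -/
/-!
Writing `P_m(y) = y^(m+3) - y^(m+2) - y^(m+1) + 1 = y^(m+1) (y² - y - 1) + 1`, a root `y > 1` of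
`P_n` satisfies `y² - y - 1 = -y^(-(n+1))`. Hence `P_m(λ_n) = 1 - λ_n^(m-n) > 0` for `m < n`,
while `P_m = (y - 1) q_m` with `q_m(1) = -m < 0` is negative just to the right of `1`; the
intermediate value theorem then puts a root of `P_m` in `(1, λ_n)`, so `λ_m < λ_n`. For the
limit, `(φ - y)(φ + y - 1) = -(y² - y - 1) = y^(-(n+1))` bounds `|λ_n - φ|` by `λ_1^(-(n+1))`.
-/

open Filter Finset Real goldenRatio

theorem IsSmallestRootGT1.le_of_nonpos_of_nonneg {P : ℝ → ℝ} {r x t : ℝ}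
    (hr : IsSmallestRootGT1 P r) (hP : Continuous P) (hx : 1 < x) (hxt : x ≤ t)
    (hPx : P x ≤ 0) (hPt : 0 ≤ P t) : r ≤ t := by
  obtain ⟨y, hy, hPy⟩ := intermediate_value_Icc hxt hP.continuousOn ⟨hPx, hPt⟩
  exact (hr.2.2 y (hx.trans_le hy.1) hPy).trans hy.2

def lambdaPoly (m : ℕ) (y : ℝ) : ℝ := y ^ (m + 3) - y ^ (m + 2) - y ^ (m + 1) + 1

theorem continuous_lambdaPoly (m : ℕ) : Continuous (lambdaPoly m) := by
  unfold lambdaPoly; fun_prop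

theorem lambdaPoly_eq (m : ℕ) (y : ℝ) : lambdaPoly m y = y ^ (m + 1) * (y ^ 2 - y - 1) + 1 := by
  unfold lambdaPoly; ring

theorem lambdaPoly_eq_sub_one_mul (m : ℕ) (y : ℝ) :
    lambdaPoly m y = (y - 1) * (y ^ (m + 2) - ∑ i ∈ range (m + 1), y ^ i) := by
  rw [mul_sub, mul_comm (y - 1) (∑ i ∈ range (m + 1), y ^ i), geom_sum_mul, lambdaPoly]
  ring

theorem exists_lambdaPoly_neg_s14 {m : ℕ} (hm : 1 ≤ m) {t : ℝ} (ht : 1 < t) :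
    ∃ x ∈ Set.Ioo 1 t, lambdaPoly m x < 0 := by
  set q : ℝ → ℝ := fun y => y ^ (m + 2) - ∑ i ∈ range (m + 1), y ^ i
  have hq1 : q 1 < 0 := by
    simp only [q, one_pow, sum_const, card_range, nsmul_eq_mul, mul_one]
    push_cast
    linarith [(Nat.one_le_cast (α := ℝ)).2 hm]
  have hq : ∀ᶠ y in nhdsWithin 1 (Set.Ioi 1), q y < 0 :=
    nhdsWithin_le_nhds <| (show Continuous q by fun_prop).continuousAt.eventually_lt
      continuousAt_const hq1
  obtain ⟨x, hxq, hx⟩ := (hq.and (Ioo_mem_nhdsGT ht)).exists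
  refine ⟨x, hx, ?_⟩
  rw [lambdaPoly_eq_sub_one_mul]
  exact mul_neg_of_pos_of_neg (sub_pos.2 hx.1) hxq

theorem lambdaPoly_pos_of_lt {m n : ℕ} (hmn : m < n) {y : ℝ} (hy : 1 < y)
    (hn : lambdaPoly n y = 0) : 0 < lambdaPoly m y := by
  rw [lambdaPoly_eq] at hn ⊢
  have hpow : y ^ (m + 1) < y ^ (n + 1) := pow_lt_pow_right₀ hy (by omega)
  have hquad : y ^ 2 - y - 1 < 0 := by nlinarith [pow_pos (zero_lt_one.trans hy) (n + 1)]
  nlinarith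

theorem IsSmallestRootGT1.lambdaPoly_lt {m n : ℕ} (hm : 1 ≤ m) (hmn : m < n) {r s : ℝ}
    (hr : IsSmallestRootGT1 (lambdaPoly m) r) (hs : IsSmallestRootGT1 (lambdaPoly n) s) :
    r < s := by
  have hpos := lambdaPoly_pos_of_lt hmn hs.1 hs.2.1
  obtain ⟨x, hx, hPx⟩ := exists_lambdaPoly_neg_s14 hm hs.1
  refine (hr.le_of_nonpos_of_nonneg (continuous_lambdaPoly m) hx.1 hx.2.le hPx.le
    hpos.le).lt_of_ne ?_
  rintro rfl
  exact hpos.ne' hr.2.1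

theorem abs_sub_goldenRatio_le {m : ℕ} {c y : ℝ} (hc : 1 < c) (hcy : c ≤ y)
    (hy : lambdaPoly m y = 0) : |y - φ| ≤ c⁻¹ ^ (m + 1) := by
  have hy0 : 0 < y ^ (m + 1) := pow_pos (by linarith) _
  have hquad : (φ - y) * (φ + y - 1) = (y ^ (m + 1))⁻¹ := by
    have hroot : y ^ 2 - y - 1 = -(y ^ (m + 1))⁻¹ := by
      rw [lambdaPoly_eq] at hy
      field_simp
      linear_combination hy
    linear_combination goldenRatio_sq - hroot
  have hφ := one_lt_goldenRatio
  have hpos : 0 < φ - y := pos_of_mul_pos_left (hquad ▸ inv_pos.2 hy0) (by linarith)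
  calc |y - φ| = φ - y := by rw [abs_sub_comm, abs_of_pos hpos]
    _ ≤ (φ - y) * (φ + y - 1) := le_mul_of_one_le_right hpos.le (by linarith)
    _ = (y ^ (m + 1))⁻¹ := hquad
    _ ≤ c⁻¹ ^ (m + 1) := by
      rw [inv_pow]
      exact inv_anti₀ (pow_pos (by linarith) _) (pow_le_pow_left₀ (by linarith) hcy _)

/-- If `lam m` is, for each `m ≥ 1`, the smallest real root greater than 1 of
`x^{m+3} - x^{m+2} - x^{m+1} + 1`, then `(λ_m)_{m ≥ 1}` is strictly increasing and
converges to the golden ratio `(1+√5)/2`. -/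
theorem lambda_strictMono_tendsto_golden (lam : ℕ → ℝ)
    (h : ∀ m : ℕ, 1 ≤ m →
      IsSmallestRootGT1 (fun y => y ^ (m + 3) - y ^ (m + 2) - y ^ (m + 1) + 1) (lam m)) :
    (∀ m n : ℕ, 1 ≤ m → m < n → lam m < lam n) ∧
      Filter.Tendsto lam Filter.atTop (nhds ((1 + Real.sqrt 5) / 2)) := by
  have hroot : ∀ m, 1 ≤ m → IsSmallestRootGT1 (lambdaPoly m) (lam m) := h
  have hmono : ∀ m n : ℕ, 1 ≤ m → m < n → lam m < lam n := fun m n hm hmn =>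
    (hroot m hm).lambdaPoly_lt hm hmn (hroot n (hm.trans hmn.le))
  refine ⟨hmono, tendsto_iff_norm_sub_tendsto_zero.2 ?_⟩
  have hlam1 : 1 < lam 1 := (hroot 1 le_rfl).1
  have hbound : ∀ᶠ m in atTop, ‖lam m - φ‖ ≤ (lam 1)⁻¹ ^ (m + 1) := by
    filter_upwards [eventually_ge_atTop 1] with m hm
    have hle : lam 1 ≤ lam m := by
      rcases hm.eq_or_lt with rfl | h1
      exacts [le_rfl, (hmono 1 m le_rfl h1).le]
    exact abs_sub_goldenRatio_le hlam1 hle (hroot m hm).2.1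
  refine squeeze_zero' (Eventually.of_forall fun _ => norm_nonneg _) hbound ?_
  exact (tendsto_pow_atTop_nhds_zero_of_lt_one (by positivity)
    (inv_lt_one_of_one_lt₀ hlam1)).comp (tendsto_add_atTop_nat 1)
end

section
/- For every ε > 0 there exists δ > 0 such that for every real β with 2 - δ < β < 2 and every x ∈ (0, 1/(β-1)), limsup_{k→∞} (log₂ N_k(x,β))/k ≤ ε; that is, sup_{x ∈ (0,1/(β-1))} limsup_{k→∞} (log₂ N_k(x,β))/k → 0 as β → 2⁻. -/
/-- `E_k(x,β)`: the set of words of length `k` extendable to a β-expansion of `x`. -/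
def prefixSet (β x : ℝ) (k : ℕ) : Set (Fin k → Bool) :=
  {w | ∃ ε ∈ betaExpansions β x, ∀ i : Fin k, ε i = w i}

/-- `N_k(x,β)`: the number of `k`-prefixes of β-expansions of `x`. -/
noncomputable def Nk (β x : ℝ) (k : ℕ) : ℕ := (prefixSet β x k).ncard

/-!
If three β-expansions of `x` first split at position `j`, two of them agree at `j` and the
third differs. Say the two carry the digit `1` and the third `0` (the other case is the same
after complementing all digits, which maps values `v` to `1/(β-1) - v`). Their common value
after position `j` is then also the third expansion's value minus `1`, so at most
`1/(β-1) - 1 = (2-β)/(β-1)`; multiplying by `β` at each step, it stays below `1` for `m` more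
steps as long as `β^m (1/(β-1) - 1) < 1`, and meanwhile every digit is forced to be `0`. Hence a
`k`-prefix has at most two extensions of length `k + m + 1`, so `N_{k+m+1} ≤ 2 N_k` and the
growth rate is at most `1/(m+1)`. As `β → 2` the quantity `1/(β-1) - 1` tends to `0`, so `m` can
be taken arbitrarily large.
-/

open Filter Topology

noncomputable def betaValue (β : ℝ) (ε : ℕ → Bool) : ℝ :=
  ∑' n : ℕ, (if ε n then (1 : ℝ) else 0) / β ^ (n + 1)

section Geometric

variable {β : ℝ}

theorem tsum_one_div_pow_succ (hβ : 1 < β) : ∑' n : ℕ, 1 / β ^ (n + 1) = 1 / (β - 1) := by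
  have hβ' : β⁻¹ < 1 := inv_lt_one_of_one_lt₀ hβ
  simp_rw [one_div, pow_succ', mul_inv, ← inv_pow]
  rw [tsum_mul_left, tsum_geometric_of_lt_one (by positivity) hβ']
  field_simp

theorem summable_one_div_pow_succ (hβ : 1 < β) : Summable fun n : ℕ => 1 / β ^ (n + 1) := by
  simp_rw [one_div, pow_succ', mul_inv, ← inv_pow]
  exact (summable_geometric_of_lt_one (by positivity) (inv_lt_one_of_one_lt₀ hβ)).mul_left _

end Geometric

theorem Bool.pair_eq_of_not_all_eq {p q r : Bool} (h : ¬(p = q ∧ p = r)) :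
    (p = q ∧ r ≠ p) ∨ (p = r ∧ q ≠ p) ∨ (q = r ∧ p ≠ q) := by
  revert h; cases p <;> cases q <;> cases r <;> decide

namespace betaValue

variable {β : ℝ}

theorem summable_terms (hβ : 1 < β) (ε : ℕ → Bool) :
    Summable fun n : ℕ => (if ε n then (1 : ℝ) else 0) / β ^ (n + 1) :=
  (summable_one_div_pow_succ hβ).of_nonneg_of_le
    (fun n => by positivity) (fun n => by gcongr; split <;> norm_num)

theorem nonneg (hβ : 0 ≤ β) (ε : ℕ → Bool) : 0 ≤ betaValue β ε :=
  tsum_nonneg fun n => by positivity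

theorem compl_eq (hβ : 1 < β) (ε : ℕ → Bool) :
    betaValue β (fun n => !ε n) = 1 / (β - 1) - betaValue β ε := by
  rw [eq_sub_iff_add_eq, betaValue, betaValue,
    ← (summable_terms hβ _).tsum_add (summable_terms hβ ε), ← tsum_one_div_pow_succ hβ]
  congr 1 with n
  cases ε n <;> simp

theorem le_one_div_sub_one (hβ : 1 < β) (ε : ℕ → Bool) : betaValue β ε ≤ 1 / (β - 1) := by
  linarith [compl_eq hβ ε, nonneg (by linarith) fun n => !ε n]

theorem mul_eq (hβ : 1 < β) (ε : ℕ → Bool) :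
    β * betaValue β ε = (if ε 0 then 1 else 0) + betaValue β fun n => ε (n + 1) := by
  rw [betaValue, (summable_terms hβ ε).tsum_eq_zero_add, mul_add, ← tsum_mul_left, betaValue]
  have hβ0 : β ≠ 0 := by positivity
  congr 1
  · rw [zero_add, pow_one]
    field_simp
  · congr 1 with n
    rw [pow_succ' β (n + 1)]
    field_simp

theorem eq_false_of_pow_mul_lt_one (hβ : 1 < β) {m : ℕ} {ε : ℕ → Bool}
    (h : β ^ m * betaValue β ε < 1) : ∀ i < m, ε i = false := by
  induction m generalizing ε with
  | zero => intro i hi; omega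
  | succ m ih =>
    have hβ0 : 0 ≤ β := by linarith
    have hstep := mul_eq hβ ε
    have hε0 : ε 0 = false := by
      by_contra hc
      rw [Bool.not_eq_false] at hc
      rw [hc, if_pos rfl] at hstep
      have hle : β * betaValue β ε ≤ β ^ (m + 1) * betaValue β ε :=
        mul_le_mul_of_nonneg_right (le_self_pow₀ hβ.le (by omega)) (nonneg hβ0 ε)
      linarith [nonneg hβ0 fun n => ε (n + 1)]
    rw [hε0, if_neg (by simp), zero_add] at hstep
    have hshift : β ^ m * betaValue β (fun n => ε (n + 1)) < 1 := by
      rwa [← hstep, ← mul_assoc, ← pow_succ]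
    intro i hi
    cases i with
    | zero => exact hε0
    | succ i => exact ih hshift i (by omega)

theorem eq_true_of_pow_mul_sub_lt_one (hβ : 1 < β) {m : ℕ} {ε : ℕ → Bool}
    (h : β ^ m * (1 / (β - 1) - betaValue β ε) < 1) : ∀ i < m, ε i = true := by
  rw [← compl_eq hβ] at h
  intro i hi
  simpa using eq_false_of_pow_mul_lt_one hβ h i hi

theorem eq_false_of_branch (hβ : 1 < β) {m : ℕ} (hm : β ^ m * (1 / (β - 1) - 1) < 1)
    {a η : ℕ → Bool} (hv : betaValue β a = betaValue β η) (ha : a 0 = true)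
    (hη : η 0 = false) : ∀ i < m, a (i + 1) = false := by
  have hva := mul_eq hβ a
  have hvη := mul_eq hβ η
  rw [ha, if_pos rfl, hv] at hva
  rw [hη, if_neg (by simp), zero_add] at hvη
  have hsmall : betaValue β (fun n => a (n + 1)) ≤ 1 / (β - 1) - 1 := by
    linarith [le_one_div_sub_one hβ fun n => η (n + 1)]
  exact eq_false_of_pow_mul_lt_one hβ (lt_of_le_of_lt (by gcongr) hm)

theorem eq_true_of_branch (hβ : 1 < β) {m : ℕ} (hm : β ^ m * (1 / (β - 1) - 1) < 1)
    {a η : ℕ → Bool} (hv : betaValue β a = betaValue β η) (ha : a 0 = false)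
    (hη : η 0 = true) : ∀ i < m, a (i + 1) = true := by
  have hnot := eq_false_of_branch hβ hm (a := fun n => !a n) (η := fun n => !η n)
    (by rw [compl_eq hβ, compl_eq hβ, hv]) (by simp [ha]) (by simp [hη])
  intro i hi
  simpa using hnot i hi

theorem eq_of_branch (hβ : 1 < β) {m : ℕ} (hm : β ^ m * (1 / (β - 1) - 1) < 1)
    {a b η : ℕ → Bool} (ha : betaValue β a = betaValue β η) (hb : betaValue β b = betaValue β η)
    (hab : a 0 = b 0) (hη : η 0 ≠ a 0) : ∀ i < m + 1, a i = b i := by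
  intro i hi
  cases i with
  | zero => exact hab
  | succ i =>
    cases h : a 0
    · have hη' : η 0 = true := by simpa [h] using hη
      rw [eq_true_of_branch hβ hm ha h hη' i (by omega),
        eq_true_of_branch hβ hm hb (hab ▸ h) hη' i (by omega)]
    · have hη' : η 0 = false := by simpa [h] using hη
      rw [eq_false_of_branch hβ hm ha h hη' i (by omega),
        eq_false_of_branch hβ hm hb (hab ▸ h) hη' i (by omega)]

theorem shift_eq_of_eq (hβ : 1 < β) {a b : ℕ → Bool} (h : betaValue β a = betaValue β b)
    {j : ℕ} (hab : ∀ i < j, a i = b i) :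
    betaValue β (fun n => a (n + j)) = betaValue β (fun n => b (n + j)) := by
  induction j with
  | zero => simpa using h
  | succ j ih =>
    have hj := ih fun i hi => hab i (by omega)
    have hsa := mul_eq hβ fun n => a (n + j)
    have hsb := mul_eq hβ fun n => b (n + j)
    simp only [zero_add, hab j (by omega), Nat.add_right_comm _ 1 j] at hsa hsb
    rw [hj] at hsa
    simp only [← Nat.add_assoc]
    linarith

theorem eq_of_branch_at (hβ : 1 < β) {m : ℕ} (hm : β ^ m * (1 / (β - 1) - 1) < 1)
    {a b η : ℕ → Bool} (ha : betaValue β a = betaValue β η) (hb : betaValue β b = betaValue β η)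
    {j : ℕ} (haη : ∀ i < j, a i = η i) (hbη : ∀ i < j, b i = η i) (hab : a j = b j)
    (hη : η j ≠ a j) : ∀ i < j + (m + 1), a i = b i := by
  have hshift := eq_of_branch hβ hm (shift_eq_of_eq hβ ha haη) (shift_eq_of_eq hβ hb hbη)
    (by simpa using hab) (by simpa using hη)
  intro i hi
  rcases lt_or_ge i j with hij | hij
  · rw [haη i hij, hbη i hij]
  · obtain ⟨d, rfl⟩ := Nat.exists_eq_add_of_le hij
    simpa [Nat.add_comm] using hshift d (by omega)

theorem agree_pair_of_agree_three (hβ : 1 < β) {m : ℕ} (hm : β ^ m * (1 / (β - 1) - 1) < 1)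
    {x : ℝ} {a b c : ℕ → Bool} (ha : betaValue β a = x) (hb : betaValue β b = x)
    (hc : betaValue β c = x) {k : ℕ} (hk : ∀ i < k, a i = b i ∧ a i = c i) :
    (∀ i < k + (m + 1), a i = b i) ∨ (∀ i < k + (m + 1), a i = c i) ∨
      (∀ i < k + (m + 1), b i = c i) := by
  classical
  by_cases hall : ∀ i < k + (m + 1), a i = b i ∧ a i = c i
  · exact Or.inl fun i hi => (hall i hi).1
  have hex : ∃ j, ¬(a j = b j ∧ a j = c j) := by
    by_contra! h
    exact hall fun i _ => h i
  set j := Nat.find hex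
  have hmin : ∀ i < j, a i = b i ∧ a i = c i := fun i hi => not_not.1 (Nat.find_min hex hi)
  have hkj : k ≤ j := by
    by_contra! hjk
    exact Nat.find_spec hex (hk j hjk)
  have hwiden {f g : ℕ → Bool} (h : ∀ i < j + (m + 1), f i = g i) :
      ∀ i < k + (m + 1), f i = g i := fun i hi => h i (by omega)
  rcases Bool.pair_eq_of_not_all_eq (Nat.find_spec hex) with ⟨h1, h2⟩ | ⟨h1, h2⟩ | ⟨h1, h2⟩
  · exact Or.inl <| hwiden <| eq_of_branch_at hβ hm (ha.trans hc.symm) (hb.trans hc.symm)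
      (fun i hi => (hmin i hi).2) (fun i hi => (hmin i hi).1.symm.trans (hmin i hi).2) h1 h2
  · exact Or.inr <| Or.inl <| hwiden <| eq_of_branch_at hβ hm (ha.trans hb.symm)
      (hc.trans hb.symm) (fun i hi => (hmin i hi).1) (fun i hi => (hmin i hi).2.symm.trans
      (hmin i hi).1) h1 h2
  · exact Or.inr <| Or.inr <| hwiden <| eq_of_branch_at hβ hm (hb.trans ha.symm)
      (hc.trans ha.symm) (fun i hi => (hmin i hi).1.symm) (fun i hi => (hmin i hi).2.symm) h1 h2

end betaValue

section Counting

variable {β x : ℝ}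

theorem eq_or_eq_or_eq_of_mem_prefixSet (hβ : 1 < β) {m : ℕ}
    (hm : β ^ m * (1 / (β - 1) - 1) < 1) {k : ℕ} {u v w : Fin (k + (m + 1)) → Bool}
    (hu : u ∈ prefixSet β x _) (hv : v ∈ prefixSet β x _) (hw : w ∈ prefixSet β x _)
    (huv : u ∘ Fin.castAdd (m + 1) = v ∘ Fin.castAdd (m + 1))
    (huw : u ∘ Fin.castAdd (m + 1) = w ∘ Fin.castAdd (m + 1)) : u = v ∨ u = w ∨ v = w := by
  obtain ⟨a, ha, hau⟩ := hu
  obtain ⟨b, hb, hbv⟩ := hv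
  obtain ⟨c, hc, hcw⟩ := hw
  have hprefix {f g : Fin (k + (m + 1)) → Bool} {s t : ℕ → Bool} (hs : ∀ i : Fin _, s i = f i)
      (ht : ∀ i : Fin _, t i = g i) (hfg : f ∘ Fin.castAdd (m + 1) = g ∘ Fin.castAdd (m + 1)) :
      ∀ i < k, s i = t i := fun i hi =>
    (hs ⟨i, by omega⟩).trans ((congrFun hfg ⟨i, hi⟩).trans (ht ⟨i, by omega⟩).symm)
  have hword {f g : Fin (k + (m + 1)) → Bool} {s t : ℕ → Bool} (hs : ∀ i : Fin _, s i = f i)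
      (ht : ∀ i : Fin _, t i = g i) (hst : ∀ i < k + (m + 1), s i = t i) : f = g :=
    funext fun i => by rw [← hs, ← ht, hst i i.2]
  rcases betaValue.agree_pair_of_agree_three hβ hm ha hb hc
      (fun i hi => ⟨hprefix hau hbv huv i hi, hprefix hau hcw huw i hi⟩) with h | h | h
  · exact Or.inl (hword hau hbv h)
  · exact Or.inr (Or.inl (hword hau hcw h))
  · exact Or.inr (Or.inr (hword hbv hcw h))

theorem Nk_add_le_two_mul (hβ : 1 < β) {m : ℕ} (hm : β ^ m * (1 / (β - 1) - 1) < 1) (k : ℕ) :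
    Nk β x (k + (m + 1)) ≤ 2 * Nk β x k := by
  classical
  rw [Nk, Nk, Set.ncard_eq_toFinset_card', Set.ncard_eq_toFinset_card']
  refine Finset.card_le_mul_card_image_of_maps_to (f := fun w => w ∘ Fin.castAdd (m + 1)) ?_ 2 ?_
  · intro w hw
    simp only [Set.mem_toFinset] at hw ⊢
    obtain ⟨ε, hε, hεw⟩ := hw
    exact ⟨ε, hε, fun i => hεw (Fin.castAdd _ i)⟩
  · intro r _
    by_contra! h3
    obtain ⟨u, v, w, hu, hv, hw, huv, huw, hvw⟩ := Finset.two_lt_card_iff.1 h3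
    simp only [Finset.mem_filter, Set.mem_toFinset] at hu hv hw
    rcases eq_or_eq_or_eq_of_mem_prefixSet hβ hm hu.1 hv.1 hw.1 (hu.2.trans hv.2.symm)
      (hu.2.trans hw.2.symm) with h | h | h <;> contradiction

theorem Nk_le_two_pow (k : ℕ) : Nk β x k ≤ 2 ^ k :=
  (Set.ncard_le_card _).trans_eq (by simp)

end Counting

theorem le_two_pow_of_add_le_two_mul {N : ℕ → ℕ} {p : ℕ} (hp : 0 < p)
    (hstep : ∀ k, N (k + p) ≤ 2 * N k) (hinit : ∀ r < p, N r ≤ 2 ^ r) (n : ℕ) :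
    N n ≤ 2 ^ (n / p + p) := by
  induction n using Nat.strong_induction_on with
  | _ n ih =>
    rcases lt_or_ge n p with hnp | hnp
    · exact (hinit n hnp).trans
        (Nat.pow_le_pow_right (by norm_num) (hnp.le.trans (Nat.le_add_left _ _)))
    · obtain ⟨k, rfl⟩ := Nat.exists_eq_add_of_le' hnp
      calc N (k + p) ≤ 2 * N k := hstep k
        _ ≤ 2 * 2 ^ (k / p + p) := by gcongr; exact ih k (by omega)
        _ = 2 ^ ((k + p) / p + p) := by rw [Nat.add_div_right k hp]; ring

theorem limsup_logb_div_le_of_le_two_pow {N : ℕ → ℕ} {p : ℕ} (hp : 0 < p)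
    (h : ∀ n, N n ≤ 2 ^ (n / p + p)) :
    limsup (fun n : ℕ => Real.logb 2 (N n) / n) atTop ≤ 1 / p := by
  have hnonneg (n : ℕ) : 0 ≤ Real.logb 2 (N n) / n :=
    div_nonneg (div_nonneg (Real.log_natCast_nonneg _) (Real.log_nonneg one_le_two)) n.cast_nonneg
  have hlog (n : ℕ) : Real.logb 2 (N n) ≤ n / p + p := by
    rcases (N n).eq_zero_or_pos with h0 | hpos
    · rw [h0, Nat.cast_zero, Real.logb_zero]
      positivity
    · calc Real.logb 2 (N n) ≤ Real.logb 2 (2 ^ (n / p + p) : ℕ) :=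
            Real.logb_le_logb_of_le (by norm_num) (by exact_mod_cast hpos) (by exact_mod_cast h n)
        _ = (n / p : ℕ) + p := by
          rw [Nat.cast_pow, Nat.cast_ofNat, Real.logb_pow, Real.logb_self_eq_one one_lt_two]
          push_cast
          ring
        _ ≤ n / p + p := by gcongr; exact Nat.cast_div_le
  have hbound : ∀ᶠ n : ℕ in atTop, Real.logb 2 (N n) / n ≤ 1 / p + p / n := by
    filter_upwards [eventually_gt_atTop 0] with n hn
    rw [div_le_iff₀ (by positivity)]
    calc Real.logb 2 (N n) ≤ n / p + p := hlog n
      _ = (1 / p + p / n) * n := by field_simp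
  have hlim : Tendsto (fun n : ℕ => 1 / (p : ℝ) + p / n) atTop (𝓝 (1 / p)) := by
    simpa using tendsto_const_nhds.add (tendsto_const_div_atTop_nhds_zero_nat (p : ℝ))
  calc limsup (fun n : ℕ => Real.logb 2 (N n) / n) atTop
      ≤ limsup (fun n : ℕ => 1 / (p : ℝ) + p / n) atTop :=
        limsup_le_limsup hbound (isCoboundedUnder_le_of_le atTop hnonneg) hlim.isBoundedUnder_le
    _ = 1 / p := hlim.limsup_eq

theorem limsup_logb_Nk_div_le {β x : ℝ} (hβ : 1 < β) {m : ℕ}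
    (hm : β ^ m * (1 / (β - 1) - 1) < 1) :
    limsup (fun k : ℕ => Real.logb 2 (Nk β x k) / k) atTop ≤ 1 / (m + 1) := by
  have hp : 0 < m + 1 := m.succ_pos
  exact_mod_cast limsup_logb_div_le_of_le_two_pow hp
    (le_two_pow_of_add_le_two_mul hp (Nk_add_le_two_mul hβ hm) fun r _ => Nk_le_two_pow r)

theorem eventually_one_lt_and_pow_mul_lt_one (m : ℕ) :
    ∀ᶠ β in 𝓝 (2 : ℝ), 1 < β ∧ β ^ m * (1 / (β - 1) - 1) < 1 := by
  have hcont : ContinuousAt (fun β : ℝ => β ^ m * (1 / (β - 1) - 1)) 2 := by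
    fun_prop (disch := norm_num)
  exact (lt_mem_nhds (by norm_num : (1 : ℝ) < 2)).and
    (hcont.eventually_lt continuousAt_const (by norm_num))

/-- As `β → 2⁻`, the supremum over `x ∈ (0, 1/(β-1))` of the upper growth rate of
`N_k(x,β)` tends to `0`. -/
theorem limsup_growth_rate_tendsto_zero :
    ∀ ε : ℝ, 0 < ε → ∃ δ : ℝ, 0 < δ ∧
      ∀ β : ℝ, 2 - δ < β → β < 2 →
        ∀ x : ℝ, x ∈ Set.Ioo 0 (1 / (β - 1)) →
          Filter.limsup (fun k : ℕ => Real.logb 2 (Nk β x k) / k) Filter.atTop ≤ ε := by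
  intro ε hε
  obtain ⟨m, hm⟩ := exists_nat_one_div_lt hε
  obtain ⟨δ, hδ, hnear⟩ := Metric.eventually_nhds_iff.1 (eventually_one_lt_and_pow_mul_lt_one m)
  refine ⟨δ, hδ, fun β hβδ hβ2 x _ => ?_⟩
  obtain ⟨hβ, hβm⟩ := hnear (by rw [Real.dist_eq, abs_sub_lt_iff]; constructor <;> linarith)
  exact (limsup_logb_Nk_div_le hβ hβm).trans hm.le
end
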